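/- arXiv:1109.4118 — 5 statements merged into one kernel-verified Lean document; each statement's English description precedes it below -/
import Mathlib

section
/- The micronuclear sequences obtained from the twelve Hamiltonian polygonal paths with chosen ends of the assembly graph 1212 (with the given transversal and HPP orientations, i.e. the orientation class Γ) are exactly the following twelve words, and they are pairwise distinct: e2(1A,2A) ↦ I0 M1 I1 M̄2 I2 M̄3 I3; e2(1A,2B) ↦ I0 M1 I1 M̄2 I2 M3 I3; e2(1B,2B) ↦ I0 M̄1 I1 M̄2 I2 M3 I3; e2(1B,2A) ↦ I0 M̄1 I1 M̄2 I2 M̄3 I3; e3(1A,2A) ↦ I0 M1 I1 M̄3 I2 M2 I3; e3(1A,2B) ↦ I0 M1 I1 M3 I2 M2 I3; e3(1B,2A) ↦ I0 M̄1 I1 M̄3 I2 M2 I3; e3(1B,2B) ↦ I0 M̄1 I1 M3 I2 M2 I3; e1(1A,2A) ↦ I0 M2 I1 M1 I2 M̄3 I3; e1(1A,2B) ↦ I0 M2 I1 M1 I2 M3 I3; e1(1B,2A) ↦ I0 M2 I1 M̄1 I2 M̄3 I3; e1(1B,2B) ↦ I0 M2 I1 M̄1 I2 M3 I3. -/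
/-!
Micronuclear sequences associated with assembly graphs (after C. Bisnath,
"Micronuclear Sequences Associated with Assembly Graphs").

We model an assembly graph with two rigid 4-valent vertices and two 1-valent
end vertices by the occurrence word of its (open) transversal: the transversal
visits v0, x1, x2, x3, x4, v3, where each xi is one of the two 4-valent
vertices (an element of `Fin 2`, with `0` standing for v1 and `1` for v2) and
each 4-valent vertex occurs exactly twice.  The five edges e0, ..., e4 are
enumerated along the transversal (edge `i` joins the `i`-th and `(i+1)`-st
visited vertices).  The rigid structure at a 4-valent vertex is the one making
the transversal go straight through it: the two edge-ends of one transversal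
passage are opposite, and ends belonging to different passages are neighbors.

The transversal is parametrised by the interval [0, 20]: the `j`-th visited
vertex sits at coordinate `4 * j` and edge `i` occupies `[4 * i, 4 * i + 4]`.

A Hamiltonian polygonal path (HPP) with chosen ends, denoted e_f(1x, 2y) in the
paper, is recorded by its full (middle) edge `f` together with the two ending
half-edge choices (`A` = on the incoming transversal edge of the other passage
at the corresponding vertex, `B` = on the outgoing one).  An edge can serve as
the full edge of an HPP iff both of its endpoints are 4-valent vertices
(i.e. 1 ≤ f ≤ 3) and they are distinct (so each 4-valent vertex is visited
exactly once).  Under the orientation convention Γ the HPP runs from the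
4-valent vertex v1 to the 4-valent vertex v2; the classes Γ^R, Γ^-, Γ^{-R}
reverse the orientation of the transversal, of the HPP, or of both.
-/

namespace AssemblyGraph

/-- Letters of a micronuclear sequence: `IES k` is the IES Iₖ, and `MDS i b`
is the MDS M_{i+1}, inverted (barred) iff `b = true`. -/
inductive Letter : Type
  | IES : Fin 4 → Letter
  | MDS : Fin 3 → Bool → Letter
  deriving DecidableEq, Repr

/-- A micronuclear sequence. -/
abbrev Word := List Letter

/-- Choice of an ending half-edge at a 4-valent vertex: on the incoming (`A`)
or on the outgoing (`B`) transversal edge of the other passage through that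
vertex.  At the initial vertex of the HPP, `A` is the label 1A and `B` is 1B;
at the final vertex they are the labels 2A and 2B. -/
inductive EndChoice : Type
  | A
  | B
  deriving DecidableEq, Repr

instance : Fintype EndChoice := ⟨{EndChoice.A, EndChoice.B}, by intro x; cases x <;> simp⟩

/-- The four orientation classes Γ, Γ^R, Γ⁻, Γ^{-R}. -/
inductive OrientClass : Type
  | G
  | GR
  | Gm
  | GmR
  deriving DecidableEq, Repr

instance : Fintype OrientClass :=
  ⟨{OrientClass.G, OrientClass.GR, OrientClass.Gm, OrientClass.GmR}, by intro x; cases x <;> simp⟩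

/-- The occurrence word of a transversal with two 4-valent vertices:
position `i` (for i = 0, ..., 3, the (i+1)-st visited vertex of the
transversal) ↦ which of the two 4-valent vertices sits there. -/
abbrev Occ := Fin 4 → Fin 2

/-- The assembly graph 1212: its transversal visits v0 v1 v2 v1 v2 v3. -/
def occ1212 : Occ := ![0, 1, 0, 1]

/-- The assembly graph 1221: its transversal visits v0 v1 v2 v2 v1 v3. -/
def occ1221 : Occ := ![0, 1, 1, 0]

/-- A candidate Hamiltonian polygonal path with chosen ends, e_f(1x, 2y):
the full (middle) edge `fullEdge = f`, the half-edge choice `ea = x` at the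
initial vertex and `eb = y` at the final vertex. -/
structure HPP : Type where
  fullEdge : Fin 5
  ea : EndChoice
  eb : EndChoice
  deriving DecidableEq, Repr, Fintype

/-- The 4-valent vertex at transversal position `i + 1`. -/
def occAt (w : Occ) (i : ℕ) : Fin 2 := w ⟨i % 4, by omega⟩

/-- The 4-valent vertex at which edge `f` (for 1 ≤ f ≤ 3) starts. -/
def tailV (w : Occ) (f : Fin 5) : Fin 2 := occAt w (f.1 - 1)

/-- The 4-valent vertex at which edge `f` (for 1 ≤ f ≤ 3) ends. -/
def headV (w : Occ) (f : Fin 5) : Fin 2 := occAt w f.1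

/-- `f` can be the full (middle) edge of a Hamiltonian polygonal path of `w`:
both endpoints of `f` are 4-valent vertices (1 ≤ f ≤ 3) and they are distinct,
so that the path visits every 4-valent vertex exactly once. -/
def IsFullEdge (w : Occ) (f : Fin 5) : Prop :=
  1 ≤ f.1 ∧ f.1 ≤ 3 ∧ tailV w f ≠ headV w f

instance (w : Occ) (f : Fin 5) : Decidable (IsFullEdge w f) := by
  unfold IsFullEdge; infer_instance

/-- The candidate `h` is an actual Hamiltonian polygonal path with chosen ends
of the graph `w` (the ending half-edges always admit the 2 × 2 choices). -/
def IsHPP (w : Occ) (h : HPP) : Prop := IsFullEdge w h.fullEdge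

instance (w : Occ) (h : HPP) : Decidable (IsHPP w h) := by
  unfold IsHPP; infer_instance

/-- The other transversal position (in 1, ..., 4) carrying the same 4-valent
vertex as position `p`. -/
def otherPos (w : Occ) (p : ℕ) : ℕ :=
  ((((List.range 4).map (· + 1)).find?
    fun q => decide (q ≠ p ∧ occAt w (q - 1) = occAt w (p - 1))).getD 0)

/-- A piece (segment) of the parametrised transversal [0, 20].  An MDS piece
(`isMDS = true`) records in `ord` the order (0, 1, 2 ↦ first, second, third)
in which the Γ-oriented HPP traverses it and in `dir` whether the HPP
traverses it in the direction of the transversal; for IES pieces these two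
fields are junk. -/
structure Piece : Type where
  lo : ℕ
  hi : ℕ
  isMDS : Bool
  ord : Fin 3
  dir : Bool
  deriving DecidableEq, Repr

/-- Insert a piece into a list of pieces sorted by left endpoint. -/
def insertPiece (p : Piece) : List Piece → List Piece
  | [] => [p]
  | q :: rest => if p.lo ≤ q.lo then p :: q :: rest else q :: insertPiece p rest

/-- The three MDS pieces cut out of the transversal by the HPP `h`, sorted
along the transversal: the full edge (traversed second), and the two ending
half-edges, lying on the incoming/outgoing (according to `ea`, `eb`) edge of
the other passage at the initial resp. final vertex of `h`.  The Γ-oriented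
HPP runs from v1 to v2, so it traverses the full edge in the direction of the
transversal iff the tail of the full edge is v1. -/
def hppPieces (w : Occ) (h : HPP) : List Piece :=
  let f := h.fullEdge.1
  let inc : Bool := decide (tailV w h.fullEdge = 0)
  let q := otherPos w (if inc then f else f + 1)
  let r := otherPos w (if inc then f + 1 else f)
  let fullSeg : Piece := ⟨4 * f, 4 * f + 4, true, 1, inc⟩
  let g1 : Piece := match h.ea with
    | .A => ⟨4 * q - 1, 4 * q, true, 0, true⟩
    | .B => ⟨4 * q, 4 * q + 1, true, 0, false⟩
  let g3 : Piece := match h.eb with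
    | .A => ⟨4 * r - 1, 4 * r, true, 2, false⟩
    | .B => ⟨4 * r, 4 * r + 1, true, 2, true⟩
  insertPiece g1 (insertPiece g3 [fullSeg])

/-- Fill the gaps between consecutive MDS pieces (and before the first and
after the last one) with IES pieces. -/
def fillGaps : ℕ → List Piece → List Piece
  | x, [] => [⟨x, 20, false, 0, true⟩]
  | x, m :: rest => ⟨x, m.lo, false, 0, true⟩ :: m :: fillGaps m.hi rest

/-- The seven pieces (four IES and three MDS pieces, alternating) into which
the HPP `h` divides the transversal of `w`, in transversal order. -/
def allPieces (w : Occ) (h : HPP) : List Piece := fillGaps 0 (hppPieces w h)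

/-- The MDS index, in orientation class `c`, of the MDS piece traversed
`o`-th by the Γ-oriented HPP (reversing the HPP reverses the order). -/
def classOrd (c : OrientClass) (o : Fin 3) : Fin 3 :=
  match c with
  | .G | .GR => o
  | .Gm | .GmR => ⟨2 - o.1, by omega⟩

/-- Whether an MDS piece whose Γ-direction flag is `d` is inverted (barred) in
orientation class `c`: the piece is barred iff the (possibly reversed) HPP
traverses it against the (possibly reversed) transversal. -/
def classBar (c : OrientClass) (d : Bool) : Bool :=
  match c with
  | .G | .GmR => !d
  | .GR | .Gm => d

/-- Read off the word of a list of pieces, numbering the IES pieces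
consecutively in reading order. -/
def wordAux (c : OrientClass) : ℕ → List Piece → Word
  | _, [] => []
  | k, p :: rest =>
    if p.isMDS then Letter.MDS (classOrd c p.ord) (classBar c p.dir) :: wordAux c k rest
    else Letter.IES ⟨k % 4, by omega⟩ :: wordAux c (k + 1) rest

/-- The micronuclear sequence of the HPP `h` of the graph `w` in orientation
class `c`: the labels of the seven pieces read along the transversal (reversed
for the classes Γ^R and Γ^{-R}). -/
def mnSeq (w : Occ) (c : OrientClass) (h : HPP) : Word :=
  wordAux c 0 (match c with
    | .G | .Gm => allPieces w h
    | .GR | .GmR => (allPieces w h).reverse)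

/-- The reverse complement of a micronuclear sequence: reverse the word,
interchange each Mᵢ with M̄ᵢ, and replace each Iₖ by I_{3-k}. -/
def revComp (u : Word) : Word :=
  u.reverse.map fun l => match l with
    | .IES k => .IES ⟨3 - k.1, by omega⟩
    | .MDS i b => .MDS i (!b)

/-- Whether the smoothing at the 4-valent vertex `v` (`0` = v1, `1` = v2)
compatible with the HPP `h` is parallel (P); otherwise it is non-parallel (N).
The compatible smoothing joins the full-edge end and the chosen half-edge end
at `v` (and the remaining two ends); it preserves the transversal orientation
(type P) iff these two ends consist of one incoming and one outgoing end.
Under the Γ convention the initial vertex of `h` is v1 and the final one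
is v2. -/
def smoothIsP (w : Occ) (h : HPP) (v : Fin 2) : Bool :=
  let inc : Bool := decide (tailV w h.fullEdge = 0)
  if v = 0 then (if inc then decide (h.ea = EndChoice.A) else decide (h.ea = EndChoice.B))
  else (if inc then decide (h.eb = EndChoice.B) else decide (h.eb = EndChoice.A))

/-- Smoothing a 4-valent vertex cuts the transversal at its two passages into
three strands S0, S1, S2, rejoined by the two smoothing arcs: a parallel (P)
smoothing joins the end of S0 to the start of S2 and closes S1 onto itself,
while a non-parallel (N) smoothing joins S0 to the reversal of S1 and that to
S2.  This graph on the three strands records which strands get joined. -/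
def strandGraph (isP : Bool) : SimpleGraph (Fin 3) :=
  SimpleGraph.fromRel fun i j =>
    if isP then i = 0 ∧ j = 2 else i.1 + 1 = j.1 ∨ j.1 + 1 = i.1

/-- The number of transverse components of the graph obtained from `w` by
performing the smoothing compatible with the HPP `h` at the vertex `v`. -/
noncomputable def numTransverseComponents (w : Occ) (h : HPP) (v : Fin 2) : ℕ :=
  Nat.card (strandGraph (smoothIsP w h v)).ConnectedComponent

/-- Letters of a micronuclear sequence after smoothing: `MDS l b` is the
merged MDS M_l (for example M_{1,2} is `MDS [0,1] false` and M̄_{2,1,3} is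
`MDS [1,0,2] true`), and `IES k` is the IES Iₖ of the new sequence. -/
inductive SLetter : Type
  | IES : ℕ → SLetter
  | MDS : List (Fin 3) → Bool → SLetter
  deriving DecidableEq, Repr

/-- The edge on which the chosen half-edge based at transversal position `p`
lies: the incoming edge `e_{p-1}` for choice `A`, the outgoing edge `e_p`
for choice `B`. -/
def hostEdge (c : EndChoice) (p : ℕ) : ℕ :=
  match c with
  | .A => p - 1
  | .B => p

/-- The two transversal positions (in 1, ..., 4) of the 4-valent vertex `v`. -/
def vertexPos (w : Occ) (v : Fin 2) : ℕ × ℕ :=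
  match ((List.range 4).map (· + 1)).filter (fun p => decide (occAt w (p - 1) = v)) with
  | [p, q] => (p, q)
  | _ => (0, 0)

/-- If the two ending half-edges of the HPP lie on one and the same edge
(they then carry the two aligned copies of a pointer), smoothing excises the
IES piece lying between them on that edge; this function removes that piece. -/
def excise (w : Occ) (h : HPP) (ps : List Piece) : List Piece :=
  let f := h.fullEdge.1
  let inc : Bool := decide (tailV w h.fullEdge = 0)
  let q := otherPos w (if inc then f else f + 1)
  let r := otherPos w (if inc then f + 1 else f)
  if hostEdge h.ea q = hostEdge h.eb r then
    let hiQ := 4 * q + (match h.ea with | .A => 0 | .B => 1)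
    let hiR := 4 * r + (match h.eb with | .A => 0 | .B => 1)
    let loQ := 4 * q - (match h.ea with | .A => 1 | .B => 0)
    let loR := 4 * r - (match h.eb with | .A => 1 | .B => 0)
    ps.filter fun p => p.isMDS || !(p.lo == min hiQ hiR && p.hi == max loQ loR)
  else ps

/-- Intermediate letters for reading off the smoothed sequence. -/
inductive Proto : Type
  | pI : Proto
  | pM : List (Fin 3) → Bool → Proto
  deriving DecidableEq, Repr

/-- The proto-letter of a piece; the Bool flag says whether the piece is
traversed backwards by the new transversal (which toggles barredness). -/
def protoOf (pr : Piece × Bool) : Proto :=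
  if pr.1.isMDS then .pM [pr.1.ord] (if pr.2 then pr.1.dir else !pr.1.dir) else .pI

/-- Merge consecutive MDS proto-letters (aligned MDSs recombine) and
consecutive IES proto-letters. -/
def mergeProtos : List Proto → List Proto
  | [] => []
  | [x] => [x]
  | .pI :: .pI :: rest => mergeProtos (.pI :: rest)
  | .pM l b :: .pM l' _ :: rest => mergeProtos (.pM (l ++ l') b :: rest)
  | x :: y :: rest => x :: mergeProtos (y :: rest)
termination_by l => l.length
decreasing_by all_goals simp

/-- Number the IES letters consecutively. -/
def slettersAux : ℕ → List Proto → List SLetter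
  | _, [] => []
  | k, .pI :: rest => .IES k :: slettersAux (k + 1) rest
  | k, .pM l b :: rest => .MDS l b :: slettersAux k rest

/-- The micronuclear sequence, in orientation class Γ, of the graph obtained
from `w` by performing the smoothing compatible with the HPP `h` at the
4-valent vertex `v`, read along the resulting transversal (for an N smoothing
the result is a single transversal running through S0, the reversed S1, and
S2, where S0, S1, S2 are the three strands into which the two passages of `v`
cut the old transversal).  Consecutive MDSs merge, and the IES between two
half-edges lying on a common edge is excised. -/
def smoothedSeq (w : Occ) (h : HPP) (v : Fin 2) : List SLetter :=
  let ps := excise w h (allPieces w h)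
  let c1 := 4 * (vertexPos w v).1
  let c2 := 4 * (vertexPos w v).2
  let s0 := ps.filter fun p => decide (p.hi ≤ c1)
  let s1 := ps.filter fun p => decide (c1 ≤ p.lo ∧ p.hi ≤ c2)
  let s2 := ps.filter fun p => decide (c2 ≤ p.lo)
  let items : List (Piece × Bool) :=
    s0.map (fun p => (p, false)) ++ s1.reverse.map (fun p => (p, true))
      ++ s2.map (fun p => (p, false))
  slettersAux 0 (mergeProtos (items.map protoOf))


/-- The micronuclear sequences obtained from the twelve
Hamiltonian polygonal paths with chosen ends of the assembly graph 1212
(orientation class Γ) are exactly the listed twelve words, and they are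
pairwise distinct. -/
theorem graph1212_gamma_sequences :
    mnSeq occ1212 .G ⟨2, .A, .A⟩ = [.IES 0, .MDS 0 false, .IES 1, .MDS 1 true, .IES 2, .MDS 2 true, .IES 3] ∧
    mnSeq occ1212 .G ⟨2, .A, .B⟩ = [.IES 0, .MDS 0 false, .IES 1, .MDS 1 true, .IES 2, .MDS 2 false, .IES 3] ∧
    mnSeq occ1212 .G ⟨2, .B, .B⟩ = [.IES 0, .MDS 0 true, .IES 1, .MDS 1 true, .IES 2, .MDS 2 false, .IES 3] ∧
    mnSeq occ1212 .G ⟨2, .B, .A⟩ = [.IES 0, .MDS 0 true, .IES 1, .MDS 1 true, .IES 2, .MDS 2 true, .IES 3] ∧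
    mnSeq occ1212 .G ⟨3, .A, .A⟩ = [.IES 0, .MDS 0 false, .IES 1, .MDS 2 true, .IES 2, .MDS 1 false, .IES 3] ∧
    mnSeq occ1212 .G ⟨3, .A, .B⟩ = [.IES 0, .MDS 0 false, .IES 1, .MDS 2 false, .IES 2, .MDS 1 false, .IES 3] ∧
    mnSeq occ1212 .G ⟨3, .B, .A⟩ = [.IES 0, .MDS 0 true, .IES 1, .MDS 2 true, .IES 2, .MDS 1 false, .IES 3] ∧
    mnSeq occ1212 .G ⟨3, .B, .B⟩ = [.IES 0, .MDS 0 true, .IES 1, .MDS 2 false, .IES 2, .MDS 1 false, .IES 3] ∧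
    mnSeq occ1212 .G ⟨1, .A, .A⟩ = [.IES 0, .MDS 1 false, .IES 1, .MDS 0 false, .IES 2, .MDS 2 true, .IES 3] ∧
    mnSeq occ1212 .G ⟨1, .A, .B⟩ = [.IES 0, .MDS 1 false, .IES 1, .MDS 0 false, .IES 2, .MDS 2 false, .IES 3] ∧
    mnSeq occ1212 .G ⟨1, .B, .A⟩ = [.IES 0, .MDS 1 false, .IES 1, .MDS 0 true, .IES 2, .MDS 2 true, .IES 3] ∧
    mnSeq occ1212 .G ⟨1, .B, .B⟩ = [.IES 0, .MDS 1 false, .IES 1, .MDS 0 true, .IES 2, .MDS 2 false, .IES 3] ∧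
    ((Finset.univ.filter (fun h : HPP => IsHPP occ1212 h)).image
        (fun h => mnSeq occ1212 .G h) =
      ({[.IES 0, .MDS 0 false, .IES 1, .MDS 1 true, .IES 2, .MDS 2 true, .IES 3],
      [.IES 0, .MDS 0 false, .IES 1, .MDS 1 true, .IES 2, .MDS 2 false, .IES 3],
      [.IES 0, .MDS 0 true, .IES 1, .MDS 1 true, .IES 2, .MDS 2 false, .IES 3],
      [.IES 0, .MDS 0 true, .IES 1, .MDS 1 true, .IES 2, .MDS 2 true, .IES 3],
      [.IES 0, .MDS 0 false, .IES 1, .MDS 2 true, .IES 2, .MDS 1 false, .IES 3],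
      [.IES 0, .MDS 0 false, .IES 1, .MDS 2 false, .IES 2, .MDS 1 false, .IES 3],
      [.IES 0, .MDS 0 true, .IES 1, .MDS 2 true, .IES 2, .MDS 1 false, .IES 3],
      [.IES 0, .MDS 0 true, .IES 1, .MDS 2 false, .IES 2, .MDS 1 false, .IES 3],
      [.IES 0, .MDS 1 false, .IES 1, .MDS 0 false, .IES 2, .MDS 2 true, .IES 3],
      [.IES 0, .MDS 1 false, .IES 1, .MDS 0 false, .IES 2, .MDS 2 false, .IES 3],
      [.IES 0, .MDS 1 false, .IES 1, .MDS 0 true, .IES 2, .MDS 2 true, .IES 3],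
      [.IES 0, .MDS 1 false, .IES 1, .MDS 0 true, .IES 2, .MDS 2 false, .IES 3]} : Finset Word)) ∧
    ({[.IES 0, .MDS 0 false, .IES 1, .MDS 1 true, .IES 2, .MDS 2 true, .IES 3],
      [.IES 0, .MDS 0 false, .IES 1, .MDS 1 true, .IES 2, .MDS 2 false, .IES 3],
      [.IES 0, .MDS 0 true, .IES 1, .MDS 1 true, .IES 2, .MDS 2 false, .IES 3],
      [.IES 0, .MDS 0 true, .IES 1, .MDS 1 true, .IES 2, .MDS 2 true, .IES 3],
      [.IES 0, .MDS 0 false, .IES 1, .MDS 2 true, .IES 2, .MDS 1 false, .IES 3],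
      [.IES 0, .MDS 0 false, .IES 1, .MDS 2 false, .IES 2, .MDS 1 false, .IES 3],
      [.IES 0, .MDS 0 true, .IES 1, .MDS 2 true, .IES 2, .MDS 1 false, .IES 3],
      [.IES 0, .MDS 0 true, .IES 1, .MDS 2 false, .IES 2, .MDS 1 false, .IES 3],
      [.IES 0, .MDS 1 false, .IES 1, .MDS 0 false, .IES 2, .MDS 2 true, .IES 3],
      [.IES 0, .MDS 1 false, .IES 1, .MDS 0 false, .IES 2, .MDS 2 false, .IES 3],
      [.IES 0, .MDS 1 false, .IES 1, .MDS 0 true, .IES 2, .MDS 2 true, .IES 3],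
      [.IES 0, .MDS 1 false, .IES 1, .MDS 0 true, .IES 2, .MDS 2 false, .IES 3]} : Finset Word).card = 12 := by
  decide

end AssemblyGraph
end

section
/- The twenty-four micronuclear sequences of the assembly graph 1212 obtained from the orientation classes Γ and Γ^R of its twelve Hamiltonian polygonal paths with chosen ends are pairwise distinct, and every micronuclear sequence obtained from the orientation classes Γ^- or Γ^{-R} coincides with one of these twenty-four; hence the assembly graph 1212 has exactly twenty-four distinct micronuclear sequences. -/
/-!
Micronuclear sequences associated with assembly graphs (after C. Bisnath,
"Micronuclear Sequences Associated with Assembly Graphs").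

We model an assembly graph with two rigid 4-valent vertices and two 1-valent
end vertices by the occurrence word of its (open) transversal: the transversal
visits v0, x1, x2, x3, x4, v3, where each xi is one of the two 4-valent
vertices (an element of `Fin 2`, with `0` standing for v1 and `1` for v2) and
each 4-valent vertex occurs exactly twice.  The five edges e0, ..., e4 are
enumerated along the transversal (edge `i` joins the `i`-th and `(i+1)`-st
visited vertices).  The rigid structure at a 4-valent vertex is the one making
the transversal go straight through it: the two edge-ends of one transversal
passage are opposite, and ends belonging to different passages are neighbors.

The transversal is parametrised by the interval [0, 20]: the `j`-th visited
vertex sits at coordinate `4 * j` and edge `i` occupies `[4 * i, 4 * i + 4]`.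

A Hamiltonian polygonal path (HPP) with chosen ends, denoted e_f(1x, 2y) in the
paper, is recorded by its full (middle) edge `f` together with the two ending
half-edge choices (`A` = on the incoming transversal edge of the other passage
at the corresponding vertex, `B` = on the outgoing one).  An edge can serve as
the full edge of an HPP iff both of its endpoints are 4-valent vertices
(i.e. 1 ≤ f ≤ 3) and they are distinct (so each 4-valent vertex is visited
exactly once).  Under the orientation convention Γ the HPP runs from the
4-valent vertex v1 to the 4-valent vertex v2; the classes Γ^R, Γ^-, Γ^{-R}
reverse the orientation of the transversal, of the HPP, or of both.
-/

namespace AssemblyGraph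

set_option maxRecDepth 100000 in
/-- The twenty-four micronuclear sequences of the assembly graph
1212 obtained from the orientation classes Γ and Γ^R of its twelve HPPs with
chosen ends are pairwise distinct, every sequence obtained from Γ^- or Γ^{-R}
coincides with one of these twenty-four, and hence the assembly graph 1212
has exactly twenty-four distinct micronuclear sequences. -/
theorem graph1212_twentyfour_sequences :
    (∀ (h h' : HPP) (c c' : OrientClass), IsHPP occ1212 h → IsHPP occ1212 h' →
      (c = .G ∨ c = .GR) → (c' = .G ∨ c' = .GR) →
      mnSeq occ1212 c h = mnSeq occ1212 c' h' → h = h' ∧ c = c') ∧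
    (∀ (h : HPP) (c : OrientClass), IsHPP occ1212 h → (c = .Gm ∨ c = .GmR) →
      ∃ (h' : HPP) (c' : OrientClass), IsHPP occ1212 h' ∧ (c' = .G ∨ c' = .GR) ∧
        mnSeq occ1212 c h = mnSeq occ1212 c' h') ∧
    ((Finset.univ.filter (fun p : HPP × OrientClass => IsHPP occ1212 p.1)).image
        (fun p => mnSeq occ1212 p.2 p.1)).card = 24 := by
  exact ⟨by decide, by decide, by decide⟩

end AssemblyGraph
end

section
/- For each full edge e ∈ {e1, e2, e3} of the assembly graph 1212, the four micronuclear sequences (orientation class Γ) arising from the Hamiltonian polygonal path with full edge e under the four choices of ending half-edges e(1A,2A), e(1A,2B), e(1B,2A), e(1B,2B) are pairwise distinct. -/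
/-!
Micronuclear sequences associated with assembly graphs (after C. Bisnath,
"Micronuclear Sequences Associated with Assembly Graphs").

We model an assembly graph with two rigid 4-valent vertices and two 1-valent
end vertices by the occurrence word of its (open) transversal: the transversal
visits v0, x1, x2, x3, x4, v3, where each xi is one of the two 4-valent
vertices (an element of `Fin 2`, with `0` standing for v1 and `1` for v2) and
each 4-valent vertex occurs exactly twice.  The five edges e0, ..., e4 are
enumerated along the transversal (edge `i` joins the `i`-th and `(i+1)`-st
visited vertices).  The rigid structure at a 4-valent vertex is the one making
the transversal go straight through it: the two edge-ends of one transversal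
passage are opposite, and ends belonging to different passages are neighbors.

The transversal is parametrised by the interval [0, 20]: the `j`-th visited
vertex sits at coordinate `4 * j` and edge `i` occupies `[4 * i, 4 * i + 4]`.

A Hamiltonian polygonal path (HPP) with chosen ends, denoted e_f(1x, 2y) in the
paper, is recorded by its full (middle) edge `f` together with the two ending
half-edge choices (`A` = on the incoming transversal edge of the other passage
at the corresponding vertex, `B` = on the outgoing one).  An edge can serve as
the full edge of an HPP iff both of its endpoints are 4-valent vertices
(i.e. 1 ≤ f ≤ 3) and they are distinct (so each 4-valent vertex is visited
exactly once).  Under the orientation convention Γ the HPP runs from the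
4-valent vertex v1 to the 4-valent vertex v2; the classes Γ^R, Γ^-, Γ^{-R}
reverse the orientation of the transversal, of the HPP, or of both.
-/

namespace AssemblyGraph

/-- For each full edge e ∈ {e1, e2, e3} of the assembly graph
1212, the four micronuclear sequences (orientation class Γ) arising from the
HPP with full edge e under the four choices of ending half-edges e(1A,2A),
e(1A,2B), e(1B,2A), e(1B,2B) are pairwise distinct. -/
theorem graph1212_four_end_choices_distinct :
    ∀ f : Fin 5, (f = 1 ∨ f = 2 ∨ f = 3) →
      ∀ a b a' b' : EndChoice,
        mnSeq occ1212 .G ⟨f, a, b⟩ = mnSeq occ1212 .G ⟨f, a', b'⟩ →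
        a = a' ∧ b = b' := by
  intro f hf a b a' b'
  rcases hf with rfl | rfl | rfl <;> revert a b a' b' <;> decide

end AssemblyGraph
end

section
/- For the assembly graph 1221, the micronuclear sequences obtained from the orientation classes Γ^- and Γ^{-R} of its Hamiltonian polygonal paths are exactly the eight words I0 M̄2 I1 M1 I2 M̄3 I3, I0 M̄2 I1 M̄1 I2 M̄3 I3, I0 M̄2 I1 M1 I2 M3 I3, I0 M̄2 I1 M̄1 I2 M3 I3 (from Γ^-) and I0 M3 I1 M̄1 I2 M2 I3, I0 M3 I1 M1 I2 M2 I3, I0 M̄3 I1 M̄1 I2 M2 I3, I0 M̄3 I1 M1 I2 M2 I3 (from Γ^{-R}); these eight words are pairwise distinct and distinct from the eight Γ-sequences. Hence the assembly graph 1221 has exactly sixteen distinct micronuclear sequences. -/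
/-!
Micronuclear sequences associated with assembly graphs (after C. Bisnath,
"Micronuclear Sequences Associated with Assembly Graphs").

We model an assembly graph with two rigid 4-valent vertices and two 1-valent
end vertices by the occurrence word of its (open) transversal: the transversal
visits v0, x1, x2, x3, x4, v3, where each xi is one of the two 4-valent
vertices (an element of `Fin 2`, with `0` standing for v1 and `1` for v2) and
each 4-valent vertex occurs exactly twice.  The five edges e0, ..., e4 are
enumerated along the transversal (edge `i` joins the `i`-th and `(i+1)`-st
visited vertices).  The rigid structure at a 4-valent vertex is the one making
the transversal go straight through it: the two edge-ends of one transversal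
passage are opposite, and ends belonging to different passages are neighbors.

The transversal is parametrised by the interval [0, 20]: the `j`-th visited
vertex sits at coordinate `4 * j` and edge `i` occupies `[4 * i, 4 * i + 4]`.

A Hamiltonian polygonal path (HPP) with chosen ends, denoted e_f(1x, 2y) in the
paper, is recorded by its full (middle) edge `f` together with the two ending
half-edge choices (`A` = on the incoming transversal edge of the other passage
at the corresponding vertex, `B` = on the outgoing one).  An edge can serve as
the full edge of an HPP iff both of its endpoints are 4-valent vertices
(i.e. 1 ≤ f ≤ 3) and they are distinct (so each 4-valent vertex is visited
exactly once).  Under the orientation convention Γ the HPP runs from the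
4-valent vertex v1 to the 4-valent vertex v2; the classes Γ^R, Γ^-, Γ^{-R}
reverse the orientation of the transversal, of the HPP, or of both.
-/

namespace AssemblyGraph

/-- For the assembly graph 1221, the micronuclear sequences
obtained from the orientation classes Γ^- and Γ^{-R} of its HPPs are exactly
the listed eight words (the first four arising from Γ^-, the last four from
Γ^{-R}); these eight words are pairwise distinct and distinct from the
eight Γ-sequences.  Hence the assembly graph 1221 has exactly sixteen
distinct micronuclear sequences. -/
theorem graph1221_sixteen_sequences :
    ((Finset.univ.filter (fun p : HPP × OrientClass =>
        IsHPP occ1221 p.1 ∧ (p.2 = .Gm ∨ p.2 = .GmR))).image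
        (fun p => mnSeq occ1221 p.2 p.1) =
      ({[.IES 0, .MDS 1 true, .IES 1, .MDS 0 false, .IES 2, .MDS 2 true, .IES 3],
      [.IES 0, .MDS 1 true, .IES 1, .MDS 0 true, .IES 2, .MDS 2 true, .IES 3],
      [.IES 0, .MDS 1 true, .IES 1, .MDS 0 false, .IES 2, .MDS 2 false, .IES 3],
      [.IES 0, .MDS 1 true, .IES 1, .MDS 0 true, .IES 2, .MDS 2 false, .IES 3],
      [.IES 0, .MDS 2 false, .IES 1, .MDS 0 true, .IES 2, .MDS 1 false, .IES 3],
      [.IES 0, .MDS 2 false, .IES 1, .MDS 0 false, .IES 2, .MDS 1 false, .IES 3],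
      [.IES 0, .MDS 2 true, .IES 1, .MDS 0 true, .IES 2, .MDS 1 false, .IES 3],
      [.IES 0, .MDS 2 true, .IES 1, .MDS 0 false, .IES 2, .MDS 1 false, .IES 3]} : Finset Word)) ∧
    (∀ u ∈ ({[.IES 0, .MDS 1 true, .IES 1, .MDS 0 false, .IES 2, .MDS 2 true, .IES 3],
      [.IES 0, .MDS 1 true, .IES 1, .MDS 0 true, .IES 2, .MDS 2 true, .IES 3],
      [.IES 0, .MDS 1 true, .IES 1, .MDS 0 false, .IES 2, .MDS 2 false, .IES 3],
      [.IES 0, .MDS 1 true, .IES 1, .MDS 0 true, .IES 2, .MDS 2 false, .IES 3]} : Finset Word),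
      ∃ h : HPP, IsHPP occ1221 h ∧ mnSeq occ1221 .Gm h = u) ∧
    (∀ u ∈ ({[.IES 0, .MDS 2 false, .IES 1, .MDS 0 true, .IES 2, .MDS 1 false, .IES 3],
      [.IES 0, .MDS 2 false, .IES 1, .MDS 0 false, .IES 2, .MDS 1 false, .IES 3],
      [.IES 0, .MDS 2 true, .IES 1, .MDS 0 true, .IES 2, .MDS 1 false, .IES 3],
      [.IES 0, .MDS 2 true, .IES 1, .MDS 0 false, .IES 2, .MDS 1 false, .IES 3]} : Finset Word),
      ∃ h : HPP, IsHPP occ1221 h ∧ mnSeq occ1221 .GmR h = u) ∧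
    ({[.IES 0, .MDS 1 true, .IES 1, .MDS 0 false, .IES 2, .MDS 2 true, .IES 3],
      [.IES 0, .MDS 1 true, .IES 1, .MDS 0 true, .IES 2, .MDS 2 true, .IES 3],
      [.IES 0, .MDS 1 true, .IES 1, .MDS 0 false, .IES 2, .MDS 2 false, .IES 3],
      [.IES 0, .MDS 1 true, .IES 1, .MDS 0 true, .IES 2, .MDS 2 false, .IES 3],
      [.IES 0, .MDS 2 false, .IES 1, .MDS 0 true, .IES 2, .MDS 1 false, .IES 3],
      [.IES 0, .MDS 2 false, .IES 1, .MDS 0 false, .IES 2, .MDS 1 false, .IES 3],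
      [.IES 0, .MDS 2 true, .IES 1, .MDS 0 true, .IES 2, .MDS 1 false, .IES 3],
      [.IES 0, .MDS 2 true, .IES 1, .MDS 0 false, .IES 2, .MDS 1 false, .IES 3]} : Finset Word).card = 8 ∧
    Disjoint ({[.IES 0, .MDS 1 true, .IES 1, .MDS 0 false, .IES 2, .MDS 2 true, .IES 3],
      [.IES 0, .MDS 1 true, .IES 1, .MDS 0 true, .IES 2, .MDS 2 true, .IES 3],
      [.IES 0, .MDS 1 true, .IES 1, .MDS 0 false, .IES 2, .MDS 2 false, .IES 3],
      [.IES 0, .MDS 1 true, .IES 1, .MDS 0 true, .IES 2, .MDS 2 false, .IES 3],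
      [.IES 0, .MDS 2 false, .IES 1, .MDS 0 true, .IES 2, .MDS 1 false, .IES 3],
      [.IES 0, .MDS 2 false, .IES 1, .MDS 0 false, .IES 2, .MDS 1 false, .IES 3],
      [.IES 0, .MDS 2 true, .IES 1, .MDS 0 true, .IES 2, .MDS 1 false, .IES 3],
      [.IES 0, .MDS 2 true, .IES 1, .MDS 0 false, .IES 2, .MDS 1 false, .IES 3]} : Finset Word)
      ((Finset.univ.filter (fun h : HPP => IsHPP occ1221 h)).image
        (fun h => mnSeq occ1221 .G h)) ∧
    ((Finset.univ.filter (fun p : HPP × OrientClass => IsHPP occ1221 p.1)).image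
        (fun p => mnSeq occ1221 p.2 p.1)).card = 16 := by
  decide

end AssemblyGraph
end

section
/- In the assembly graph 1212, the N smoothings at vertex v1 compatible with the six HPPs e2(1A,2A), e2(1A,2B), e3(1B,2A), e3(1B,2B), e1(1B,2A), e1(1B,2B) transform their micronuclear sequences as follows (each resulting graph having a single transversal component): I0 M1 I1 M̄2 I2 M̄3 I3 ↦ I0 M_{1,2} I1 M̄3 I2; I0 M1 I1 M̄2 I2 M3 I3 ↦ I0 M_{1,2} I1 M3 I2; I0 M̄1 I1 M̄3 I2 M2 I3 ↦ I0 M_{3,1,2} I1; I0 M̄1 I1 M3 I2 M2 I3 ↦ I0 M̄3 I1 M_{1,2} I2; I0 M2 I1 M̄1 I2 M̄3 I3 ↦ I0 M̄_{2,1,3} I1; I0 M2 I1 M̄1 I2 M3 I3 ↦ I0 M̄_{2,1} I1 M3 I2. -/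
/-!
Micronuclear sequences associated with assembly graphs (after C. Bisnath,
"Micronuclear Sequences Associated with Assembly Graphs").

We model an assembly graph with two rigid 4-valent vertices and two 1-valent
end vertices by the occurrence word of its (open) transversal: the transversal
visits v0, x1, x2, x3, x4, v3, where each xi is one of the two 4-valent
vertices (an element of `Fin 2`, with `0` standing for v1 and `1` for v2) and
each 4-valent vertex occurs exactly twice.  The five edges e0, ..., e4 are
enumerated along the transversal (edge `i` joins the `i`-th and `(i+1)`-st
visited vertices).  The rigid structure at a 4-valent vertex is the one making
the transversal go straight through it: the two edge-ends of one transversal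
passage are opposite, and ends belonging to different passages are neighbors.

The transversal is parametrised by the interval [0, 20]: the `j`-th visited
vertex sits at coordinate `4 * j` and edge `i` occupies `[4 * i, 4 * i + 4]`.

A Hamiltonian polygonal path (HPP) with chosen ends, denoted e_f(1x, 2y) in the
paper, is recorded by its full (middle) edge `f` together with the two ending
half-edge choices (`A` = on the incoming transversal edge of the other passage
at the corresponding vertex, `B` = on the outgoing one).  An edge can serve as
the full edge of an HPP iff both of its endpoints are 4-valent vertices
(i.e. 1 ≤ f ≤ 3) and they are distinct (so each 4-valent vertex is visited
exactly once).  Under the orientation convention Γ the HPP runs from the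
4-valent vertex v1 to the 4-valent vertex v2; the classes Γ^R, Γ^-, Γ^{-R}
reverse the orientation of the transversal, of the HPP, or of both.
-/

namespace AssemblyGraph

/-
Apart from the component count, every claim is a finite evaluation of the piece model. At v1,
which occupies positions 1 and 3 of the transversal of 1212, all six compatible smoothings are
of type N; an N smoothing glues the strands S0, S̄1, S2 end to end, so the strand graph is a
path and the smoothed graph has a single transversal component.
-/

theorem strandGraph_false_eq_pathGraph : strandGraph false = SimpleGraph.pathGraph 3 := by
  ext i j
  simp only [strandGraph, SimpleGraph.fromRel_adj, SimpleGraph.pathGraph_adj]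
  grind

theorem numTransverseComponents_eq_one_of_smoothIsP_eq_false {w : Occ} {h : HPP} {v : Fin 2}
    (hN : smoothIsP w h v = false) : numTransverseComponents w h v = 1 := by
  rw [numTransverseComponents, hN, strandGraph_false_eq_pathGraph, Nat.card_eq_one_iff_unique]
  exact ⟨(SimpleGraph.pathGraph_connected 2).preconnected.subsingleton_connectedComponent,
    ⟨(SimpleGraph.pathGraph 3).connectedComponentMk 0⟩⟩

/-- In the assembly graph 1212, the N smoothings at vertex v1
compatible with the six HPPs e2(1A,2A), e2(1A,2B), e3(1B,2A), e3(1B,2B),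
e1(1B,2A), e1(1B,2B) transform their micronuclear sequences as listed (each
resulting graph having a single transversal component):
I0 M1 I1 M̄2 I2 M̄3 I3 ↦ I0 M_{1,2} I1 M̄3 I2;
I0 M1 I1 M̄2 I2 M3 I3 ↦ I0 M_{1,2} I1 M3 I2;
I0 M̄1 I1 M̄3 I2 M2 I3 ↦ I0 M_{3,1,2} I1;
I0 M̄1 I1 M3 I2 M2 I3 ↦ I0 M̄3 I1 M_{1,2} I2;
I0 M2 I1 M̄1 I2 M̄3 I3 ↦ I0 M̄_{2,1,3} I1;
I0 M2 I1 M̄1 I2 M3 I3 ↦ I0 M̄_{2,1} I1 M3 I2. -/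
theorem graph1212_N_smoothings_at_v1 :
    (mnSeq occ1212 .G ⟨2, .A, .A⟩ = [.IES 0, .MDS 0 false, .IES 1, .MDS 1 true, .IES 2, .MDS 2 true, .IES 3] ∧
      smoothIsP occ1212 ⟨2, .A, .A⟩ 0 = false ∧
      smoothedSeq occ1212 ⟨2, .A, .A⟩ 0 = [.IES 0, .MDS [0, 1] false, .IES 1, .MDS [2] true, .IES 2] ∧
      numTransverseComponents occ1212 ⟨2, .A, .A⟩ 0 = 1) ∧
    (mnSeq occ1212 .G ⟨2, .A, .B⟩ = [.IES 0, .MDS 0 false, .IES 1, .MDS 1 true, .IES 2, .MDS 2 false, .IES 3] ∧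
      smoothIsP occ1212 ⟨2, .A, .B⟩ 0 = false ∧
      smoothedSeq occ1212 ⟨2, .A, .B⟩ 0 = [.IES 0, .MDS [0, 1] false, .IES 1, .MDS [2] false, .IES 2] ∧
      numTransverseComponents occ1212 ⟨2, .A, .B⟩ 0 = 1) ∧
    (mnSeq occ1212 .G ⟨3, .B, .A⟩ = [.IES 0, .MDS 0 true, .IES 1, .MDS 2 true, .IES 2, .MDS 1 false, .IES 3] ∧
      smoothIsP occ1212 ⟨3, .B, .A⟩ 0 = false ∧
      smoothedSeq occ1212 ⟨3, .B, .A⟩ 0 = [.IES 0, .MDS [2, 0, 1] false, .IES 1] ∧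
      numTransverseComponents occ1212 ⟨3, .B, .A⟩ 0 = 1) ∧
    (mnSeq occ1212 .G ⟨3, .B, .B⟩ = [.IES 0, .MDS 0 true, .IES 1, .MDS 2 false, .IES 2, .MDS 1 false, .IES 3] ∧
      smoothIsP occ1212 ⟨3, .B, .B⟩ 0 = false ∧
      smoothedSeq occ1212 ⟨3, .B, .B⟩ 0 = [.IES 0, .MDS [2] true, .IES 1, .MDS [0, 1] false, .IES 2] ∧
      numTransverseComponents occ1212 ⟨3, .B, .B⟩ 0 = 1) ∧
    (mnSeq occ1212 .G ⟨1, .B, .A⟩ = [.IES 0, .MDS 1 false, .IES 1, .MDS 0 true, .IES 2, .MDS 2 true, .IES 3] ∧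
      smoothIsP occ1212 ⟨1, .B, .A⟩ 0 = false ∧
      smoothedSeq occ1212 ⟨1, .B, .A⟩ 0 = [.IES 0, .MDS [1, 0, 2] true, .IES 1] ∧
      numTransverseComponents occ1212 ⟨1, .B, .A⟩ 0 = 1) ∧
    (mnSeq occ1212 .G ⟨1, .B, .B⟩ = [.IES 0, .MDS 1 false, .IES 1, .MDS 0 true, .IES 2, .MDS 2 false, .IES 3] ∧
      smoothIsP occ1212 ⟨1, .B, .B⟩ 0 = false ∧
      smoothedSeq occ1212 ⟨1, .B, .B⟩ 0 = [.IES 0, .MDS [1, 0] true, .IES 1, .MDS [2] false, .IES 2] ∧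
      numTransverseComponents occ1212 ⟨1, .B, .B⟩ 0 = 1) := by
  refine ⟨?_, ?_, ?_, ?_, ?_, ?_⟩ <;>
    exact ⟨by decide, by decide, by decide +kernel,
      numTransverseComponents_eq_one_of_smoothIsP_eq_false (by decide)⟩

end AssemblyGraph
end
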